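/- arXiv:1803.10561 — 8 statements merged into one kernel-verified Lean document; each statement's English description precedes it below -/
import Mathlib

section
/- Glueing Lemma: Let X_0, X_1 be finite subsets of R^m and Y_0, Y_1 be finite subsets of R^n. Then conv((X_0 x {0} x Y_0) union (X_1 x {1} x Y_1)) equals the intersection of conv((X_0 x {0}) union (X_1 x {1})) x R^n with R^m x conv(({0} x Y_0) union ({1} x Y_1)). -/
open Set

/-- A two-term "convex combination" where each point is only required to lie in the
convex set when its coefficient is nonzero. -/
lemma combo_mem {E : Type*} [AddCommGroup E] [Module ℝ E] {C : Set E} (hC : Convex ℝ C)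
    {c1 c2 : ℝ} {v1 v2 : E} (h1 : c1 ≠ 0 → v1 ∈ C) (h2 : c2 ≠ 0 → v2 ∈ C)
    (hc1 : 0 ≤ c1) (hc2 : 0 ≤ c2) (hsum : c1 + c2 = 1) : c1 • v1 + c2 • v2 ∈ C := by
  rcases eq_or_ne c1 0 with h | h
  · have hc : c2 = 1 := by linarith
    simpa [h, hc] using h2 (by norm_num [hc])
  rcases eq_or_ne c2 0 with h' | h'
  · have hc : c1 = 1 := by linarith
    simpa [h', hc] using h1 h
  exact hC (h1 h) (h2 h') hc1 hc2 hsum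

lemma extract {E : Type*} [AddCommGroup E] [Module ℝ E] (A B : Set E) {x : E} {t : ℝ}
    (h : (x, t) ∈ convexHull ℝ ((A ×ˢ ({0} : Set ℝ)) ∪ (B ×ˢ ({1} : Set ℝ)))) :
    0 ≤ t ∧ t ≤ 1 ∧ ∃ a b, (1 - t ≠ 0 → a ∈ convexHull ℝ A) ∧
      (t ≠ 0 → b ∈ convexHull ℝ B) ∧ x = (1 - t) • a + t • b := by
  set S : Set (E × ℝ) := {p : E × ℝ | 0 ≤ p.2 ∧ p.2 ≤ 1 ∧ ∃ a b,
      (1 - p.2 ≠ 0 → a ∈ convexHull ℝ A) ∧ (p.2 ≠ 0 → b ∈ convexHull ℝ B) ∧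
      p.1 = (1 - p.2) • a + p.2 • b} with hS
  have hsub : convexHull ℝ ((A ×ˢ ({0} : Set ℝ)) ∪ (B ×ˢ ({1} : Set ℝ))) ⊆ S := by
    apply convexHull_min
    · rintro ⟨z, s⟩ (⟨hz, hs⟩ | ⟨hz, hs⟩)
      · rcases hs with rfl
        exact ⟨le_refl 0, by norm_num, z, 0, fun _ => subset_convexHull ℝ A hz,
          fun hne => absurd rfl hne, by simp⟩
      · rcases hs with rfl
        exact ⟨by norm_num, le_refl 1, 0, z, fun hne => absurd (by norm_num) hne,
          fun _ => subset_convexHull ℝ B hz, by simp⟩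
    · rintro ⟨x1, t1⟩ ⟨h01, h11, a1, b1, ha1, hb1, hx1⟩
        ⟨x2, t2⟩ ⟨h02, h12, a2, b2, ha2, hb2, hx2⟩ l u hl hu hlu
      dsimp only at h01 h11 ha1 hb1 hx1 h02 h12 ha2 hb2 hx2
      simp only [hS, Set.mem_setOf_eq, Prod.smul_mk, Prod.mk_add_mk, smul_eq_mul]
      set c1 : ℝ := l * (1 - t1) with hc1
      set c2 : ℝ := u * (1 - t2) with hc2
      set d1 : ℝ := l * t1 with hd1
      set d2 : ℝ := u * t2 with hd2
      have hc1n : 0 ≤ c1 := mul_nonneg hl (by linarith)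
      have hc2n : 0 ≤ c2 := mul_nonneg hu (by linarith)
      have hd1n : 0 ≤ d1 := mul_nonneg hl h01
      have hd2n : 0 ≤ d2 := mul_nonneg hu h02
      have hcs : c1 + c2 = 1 - (l * t1 + u * t2) := by
        rw [hc1, hc2]; linear_combination hlu
      have hds : d1 + d2 = l * t1 + u * t2 := by rw [hd1, hd2]
      refine ⟨by positivity, by nlinarith, ?_⟩
      set a : E := if hc : c1 + c2 = 0 then 0 else
        (c1 / (c1 + c2)) • a1 + (c2 / (c1 + c2)) • a2 with ha
      set b : E := if hd : d1 + d2 = 0 then 0 else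
        (d1 / (d1 + d2)) • b1 + (d2 / (d1 + d2)) • b2 with hb
      have haeq : (c1 + c2) • a = c1 • a1 + c2 • a2 := by
        rw [ha]
        split_ifs with hc
        · have h1 : c1 = 0 := by linarith
          have h2 : c2 = 0 := by linarith
          simp [h1, h2]
        · rw [smul_add, smul_smul, smul_smul, mul_div_cancel₀ _ hc, mul_div_cancel₀ _ hc]
      have hbeq : (d1 + d2) • b = d1 • b1 + d2 • b2 := by
        rw [hb]
        split_ifs with hd
        · have h1 : d1 = 0 := by linarith
          have h2 : d2 = 0 := by linarith
          simp [h1, h2]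
        · rw [smul_add, smul_smul, smul_smul, mul_div_cancel₀ _ hd, mul_div_cancel₀ _ hd]
      have hamem : c1 + c2 ≠ 0 → a ∈ convexHull ℝ A := by
        intro hc
        rw [ha, dif_neg hc]
        refine combo_mem (convex_convexHull ℝ A) ?_ ?_ (by positivity) (by positivity)
          (by field_simp)
        · intro hne
          have : c1 ≠ 0 := fun h => hne (by simp [h])
          exact ha1 (right_ne_zero_of_mul (hc1 ▸ this))
        · intro hne
          have : c2 ≠ 0 := fun h => hne (by simp [h])
          exact ha2 (right_ne_zero_of_mul (hc2 ▸ this))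
      have hbmem : d1 + d2 ≠ 0 → b ∈ convexHull ℝ B := by
        intro hd
        rw [hb, dif_neg hd]
        refine combo_mem (convex_convexHull ℝ B) ?_ ?_ (by positivity) (by positivity)
          (by field_simp)
        · intro hne
          have : d1 ≠ 0 := fun h => hne (by simp [h])
          exact hb1 (right_ne_zero_of_mul (hd1 ▸ this))
        · intro hne
          have : d2 ≠ 0 := fun h => hne (by simp [h])
          exact hb2 (right_ne_zero_of_mul (hd2 ▸ this))
      refine ⟨a, b, ?_, ?_, ?_⟩
      · intro hne; exact hamem (by rw [hcs]; exact hne)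
      · intro hne; exact hbmem (by rw [hds]; exact hne)
      · have e1 : (1 - (l * t1 + u * t2)) • a = c1 • a1 + c2 • a2 := by rw [← hcs, haeq]
        have e2 : (l * t1 + u * t2) • b = d1 • b1 + d2 • b2 := by rw [← hds, hbeq]
        rw [e1, e2, hx1, hx2, hc1, hc2, hd1, hd2]
        module
  have := hsub h
  exact this

lemma extract' {E : Type*} [AddCommGroup E] [Module ℝ E] (A B : Set E) {x : E} {t : ℝ}
    (h : (t, x) ∈ convexHull ℝ ((({0} : Set ℝ) ×ˢ A) ∪ (({1} : Set ℝ) ×ˢ B))) :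
    0 ≤ t ∧ t ≤ 1 ∧ ∃ a b, (1 - t ≠ 0 → a ∈ convexHull ℝ A) ∧
      (t ≠ 0 → b ∈ convexHull ℝ B) ∧ x = (1 - t) • a + t • b := by
  have hlin : IsLinearMap ℝ (Prod.swap : ℝ × E → E × ℝ) :=
    ⟨fun _ _ => rfl, fun _ _ => rfl⟩
  have himg := hlin.image_convexHull ((({0} : Set ℝ) ×ˢ A) ∪ (({1} : Set ℝ) ×ˢ B))
  have hmem : (x, t) ∈ convexHull ℝ ((A ×ˢ ({0} : Set ℝ)) ∪ (B ×ˢ ({1} : Set ℝ))) := by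
    have : ((x, t) : E × ℝ) ∈ Prod.swap '' convexHull ℝ
        ((({0} : Set ℝ) ×ˢ A) ∪ (({1} : Set ℝ) ×ˢ B)) := ⟨(t, x), h, rfl⟩
    rw [himg, Set.image_union, Set.image_swap_prod, Set.image_swap_prod] at this
    exact this
  exact extract A B hmem

/-- Glueing Lemma. -/
theorem stmt4 (m n : ℕ) (X0 X1 : Set (Fin m → ℝ)) (Y0 Y1 : Set (Fin n → ℝ))
    (hX0 : X0.Finite) (hX1 : X1.Finite) (hY0 : Y0.Finite) (hY1 : Y1.Finite) :
    convexHull ℝ ((X0 ×ˢ (({(0 : ℝ)} : Set ℝ) ×ˢ Y0)) ∪ (X1 ×ˢ (({(1 : ℝ)} : Set ℝ) ×ˢ Y1))) =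
      {p : (Fin m → ℝ) × ℝ × (Fin n → ℝ) |
        (p.1, p.2.1) ∈ convexHull ℝ ((X0 ×ˢ ({(0 : ℝ)} : Set ℝ)) ∪ (X1 ×ˢ ({(1 : ℝ)} : Set ℝ))) ∧
        (p.2.1, p.2.2) ∈
          convexHull ℝ ((({(0 : ℝ)} : Set ℝ) ×ˢ Y0) ∪ (({(1 : ℝ)} : Set ℝ) ×ˢ Y1))} := by
  apply le_antisymm
  · apply convexHull_min
    · rintro ⟨x, t, y⟩ (⟨hx, ht, hy⟩ | ⟨hx, ht, hy⟩)
      · exact ⟨subset_convexHull ℝ _ (Or.inl ⟨hx, ht⟩),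
          subset_convexHull ℝ _ (Or.inl ⟨ht, hy⟩)⟩
      · exact ⟨subset_convexHull ℝ _ (Or.inr ⟨hx, ht⟩),
          subset_convexHull ℝ _ (Or.inr ⟨ht, hy⟩)⟩
    · have hf1 : IsLinearMap ℝ (fun p : (Fin m → ℝ) × ℝ × (Fin n → ℝ) => (p.1, p.2.1)) :=
        ⟨fun _ _ => rfl, fun _ _ => rfl⟩
      have hf2 : IsLinearMap ℝ (fun p : (Fin m → ℝ) × ℝ × (Fin n → ℝ) => (p.2.1, p.2.2)) :=
        ⟨fun _ _ => rfl, fun _ _ => rfl⟩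
      exact Convex.inter ((convex_convexHull ℝ _).is_linear_preimage hf1)
        ((convex_convexHull ℝ _).is_linear_preimage hf2)
  · rintro ⟨x, t, y⟩ ⟨h1, h2⟩
    obtain ⟨ht0, ht1, a0, a1, hA0, hA1, hx⟩ := extract X0 X1 h1
    obtain ⟨-, -, b0, b1, hB0, hB1, hy⟩ := extract' Y0 Y1 h2
    set G := (X0 ×ˢ (({(0 : ℝ)} : Set ℝ) ×ˢ Y0)) ∪ (X1 ×ˢ (({(1 : ℝ)} : Set ℝ) ×ˢ Y1)) with hG
    have hm0 : 1 - t ≠ 0 → ((a0, ((0 : ℝ), b0)) : (Fin m → ℝ) × ℝ × (Fin n → ℝ))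
        ∈ convexHull ℝ G := by
      intro hne
      apply convexHull_mono subset_union_left
      rw [convexHull_prod, convexHull_prod, convexHull_singleton]
      exact ⟨hA0 hne, rfl, hB0 hne⟩
    have hm1 : t ≠ 0 → ((a1, ((1 : ℝ), b1)) : (Fin m → ℝ) × ℝ × (Fin n → ℝ))
        ∈ convexHull ℝ G := by
      intro hne
      apply convexHull_mono subset_union_right
      rw [convexHull_prod, convexHull_prod, convexHull_singleton]
      exact ⟨hA1 hne, rfl, hB1 hne⟩
    have key := combo_mem (convex_convexHull ℝ G) hm0 hm1 (by linarith) ht0 (by ring)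
    have heq : ((x, (t, y)) : (Fin m → ℝ) × ℝ × (Fin n → ℝ))
        = (1 - t) • (a0, ((0 : ℝ), b0)) + t • (a1, ((1 : ℝ), b1)) := by
      simp only [Prod.smul_mk, Prod.mk_add_mk, smul_eq_mul, Prod.mk.injEq]
      exact ⟨hx, by ring, hy⟩
    rw [heq]
    exact key
end

section
/- Validity of ordered parity inequalities: Let r in N^k and let x = (x^(1),...,x^(k)) with each x^(i) an ordered binary vector in {0,1}^{r_i} (i.e., x^(i)_1 >= ... >= x^(i)_{r_i}), such that the total number of ones, sum_{i=1}^k sum_{j=1}^{r_i} x^(i)_j, is even. Then for every subset F of [k] with |F| odd, the inequality sum_{i in [k]\F} f(x^(i)) + sum_{i in F} (1 - f(x^(i))) >= 1 holds. -/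
/-- The alternating sum `f(y) = ∑_j (-1)^{j-1} y_j` (0-indexed here). -/
def altSum {m : ℕ} (y : Fin m → ℝ) : ℝ := ∑ j : Fin m, (-1 : ℝ) ^ (j : ℕ) * y j

lemma cast_even {n : ℕ} (h : Even n) : ((n : ℕ) : ZMod 2) = 0 := by
  obtain ⟨c, rfl⟩ := h
  push_cast
  rw [← two_mul, show (2 : ZMod 2) = 0 by decide, zero_mul]

lemma cast_odd {n : ℕ} (h : Odd n) : ((n : ℕ) : ZMod 2) = 1 := by
  obtain ⟨c, rfl⟩ := h
  push_cast
  rw [show (2 : ZMod 2) = 0 by decide, zero_mul, zero_add]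

lemma altSum_eq : ∀ (m : ℕ) (y : Fin m → ℝ),
    (∀ j, y j = 0 ∨ y j = 1) → (∀ j j', j ≤ j' → y j' ≤ y j) →
    altSum y = if Even (∑ j, if y j = 1 then 1 else 0 : ℕ) then 0 else 1 := by
  intro m
  induction m with
  | zero => intro y _ _; simp [altSum]
  | succ m ih =>
    intro y hbin hord
    rcases hbin 0 with h0 | h0
    · have hz : ∀ j, y j = 0 := by
        intro j
        rcases hbin j with h | h
        · exact h
        · have := hord 0 j (Fin.zero_le j)
          rw [h, h0] at this; linarith
      simp [altSum, hz]
    · have htail := ih (fun j => y j.succ) (fun j => hbin j.succ)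
        (fun j j' hjj => hord j.succ j'.succ (by simpa using hjj))
      have hsum : altSum y = 1 - altSum (fun j => y j.succ) := by
        unfold altSum
        rw [Fin.sum_univ_succ]
        simp only [Fin.val_zero, pow_zero, one_mul, h0, Fin.val_succ, pow_succ]
        have hterm : ∀ j : Fin m, (-1:ℝ)^(j:ℕ) * -1 * y j.succ
            = -((-1:ℝ)^(j:ℕ) * y j.succ) := fun j => by ring
        rw [Finset.sum_congr rfl (fun j _ => hterm j), Finset.sum_neg_distrib]
        ring
      have hcnt : (∑ j, if y j = 1 then 1 else 0 : ℕ)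
          = (∑ j : Fin m, if y j.succ = 1 then 1 else 0 : ℕ) + 1 := by
        rw [Fin.sum_univ_succ, if_pos h0]; ring
      rw [hsum, htail, hcnt]
      rcases Nat.even_or_odd (∑ j : Fin m, if y j.succ = 1 then 1 else 0 : ℕ) with he | ho
      · rw [if_pos he, if_neg (by rw [Nat.even_add_one, not_not]; exact he)]; ring
      · rw [if_neg (Nat.not_even_iff_odd.mpr ho),
          if_pos (Nat.even_add_one.mpr (Nat.not_even_iff_odd.mpr ho))]; ring

lemma ncard_eq_sum {m : ℕ} (y : Fin m → ℝ) :
    {j : Fin m | y j = 1}.ncard = ∑ j, if y j = 1 then 1 else 0 := by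
  classical
  rw [Set.ncard_eq_toFinset_card', Set.toFinset_setOf, Finset.card_filter]

/-- validity of the ordered parity inequalities on even points. -/
theorem stmt5 (k : ℕ) (r : Fin k → ℕ) (x : ∀ i, Fin (r i) → ℝ)
    (hbin : ∀ i j, x i j = 0 ∨ x i j = 1)
    (hord : ∀ i, ∀ j j' : Fin (r i), j ≤ j' → x i j' ≤ x i j)
    (heven : Even (∑ i, {j : Fin (r i) | x i j = 1}.ncard))
    (F : Finset (Fin k)) (hF : Odd F.card) :
    1 ≤ ∑ i ∈ Fᶜ, altSum (x i) + ∑ i ∈ F, (1 - altSum (x i)) := by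
  classical
  set n : Fin k → ℕ := fun i => ∑ j, if x i j = 1 then 1 else 0 with hn
  have ha : ∀ i, altSum (x i) = if Even (n i) then 0 else 1 := fun i =>
    altSum_eq _ (x i) (hbin i) (hord i)
  have heven' : Even (∑ i, n i) := by
    have h : (∑ i, {j : Fin (r i) | x i j = 1}.ncard) = ∑ i, n i :=
      Finset.sum_congr rfl (fun i _ => ncard_eq_sum (x i))
    rwa [h] at heven
  have hnonneg : ∀ i, (0:ℝ) ≤ altSum (x i) := by
    intro i; rw [ha i]; split <;> norm_num
  have hle : ∀ i, altSum (x i) ≤ 1 := by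
    intro i; rw [ha i]; split <;> norm_num
  by_cases hcase : (∀ i ∈ Fᶜ, Even (n i)) ∧ (∀ i ∈ F, ¬ Even (n i))
  · exfalso
    obtain ⟨hc1, hc2⟩ := hcase
    have h2 : ((∑ i, n i : ℕ) : ZMod 2) = 0 := cast_even heven'
    have hsplit : (∑ i, n i) = ∑ i ∈ F, n i + ∑ i ∈ Fᶜ, n i :=
      (Finset.sum_add_sum_compl F n).symm
    have hFc : ((∑ i ∈ Fᶜ, n i : ℕ) : ZMod 2) = 0 := by
      rw [Nat.cast_sum]
      exact Finset.sum_eq_zero fun i hi => cast_even (hc1 i hi)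
    have hFs : ((∑ i ∈ F, n i : ℕ) : ZMod 2) = 1 := by
      rw [Nat.cast_sum,
        Finset.sum_congr rfl (fun i hi => cast_odd (Nat.not_even_iff_odd.mp (hc2 i hi))),
        Finset.sum_const, nsmul_eq_mul, mul_one]
      exact cast_odd hF
    rw [hsplit, Nat.cast_add, hFs, hFc] at h2
    norm_num at h2
  · rw [not_and_or] at hcase
    rcases Classical.em (∀ i ∈ Fᶜ, Even (n i)) with hc1 | hc1
    · have hc2 := hcase.resolve_left (not_not_intro hc1)
      push_neg at hc2
      obtain ⟨i0, hi0F, hi0⟩ := hc2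
      have h1 : (1:ℝ) ≤ ∑ i ∈ F, (1 - altSum (x i)) := by
        have hs : ∀ i ∈ F, (0:ℝ) ≤ 1 - altSum (x i) := fun i _ => by linarith [hle i]
        have hh := Finset.single_le_sum hs hi0F
        rw [ha i0, if_pos hi0] at hh
        linarith
      have h2 : (0:ℝ) ≤ ∑ i ∈ Fᶜ, altSum (x i) :=
        Finset.sum_nonneg fun i _ => hnonneg i
      linarith
    · push_neg at hc1
      obtain ⟨i0, hi0F, hi0⟩ := hc1
      have h1 : (1:ℝ) ≤ ∑ i ∈ Fᶜ, altSum (x i) := by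
        have hh := Finset.single_le_sum (fun i (_ : i ∈ Fᶜ) => hnonneg i) hi0F
        rw [ha i0, if_neg hi0] at hh
        linarith
      have h2 : (0:ℝ) ≤ ∑ i ∈ F, (1 - altSum (x i)) :=
        Finset.sum_nonneg fun i _ => by linarith [hle i]
      linarith
end

section
/- Outer description of the ordered even parity polytope: For r in N^k, the convex hull of all tuples (x^(1),...,x^(k)) of ordered binary vectors x^(i) in {0,1}^{r_i} whose total number of ones is even equals the set of points (x^(1),...,x^(k)) with each x^(i) in P_ord^{r_i} (i.e., 1 >= x^(i)_1 >= ... >= x^(i)_{r_i} >= 0) satisfying, for every F subset of [k] with |F| odd, the inequality sum_{i in [k]\F} f(x^(i)) + sum_{i in F} (1 - f(x^(i))) >= 1. -/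
open Finset Filter Topology

lemma notMem_extremePoints_of_eventually_add_smul_mem {E : Type*} [AddCommGroup E]
    [Module ℝ E] {A : Set E} {x d : E} (hd : d ≠ 0)
    (h : ∀ᶠ s in 𝓝 (0 : ℝ), x + s • d ∈ A) : x ∉ A.extremePoints ℝ := by
  obtain ⟨ε, hε, hball⟩ := Metric.eventually_nhds_iff.1 h
  have hmem : ∀ s : ℝ, |s| < ε → x + s • d ∈ A := fun s hs =>
    hball (by rwa [Real.dist_eq, sub_zero])
  have hplus := hmem (ε / 2) (by rw [abs_of_pos (half_pos hε)]; linarith)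
  have hminus := hmem (-(ε / 2)) (by rw [abs_neg, abs_of_pos (half_pos hε)]; linarith)
  intro hx
  have hseg : x ∈ openSegment ℝ (x + (-(ε / 2)) • d) (x + (ε / 2) • d) :=
    ⟨1 / 2, 1 / 2, by norm_num, by norm_num, by norm_num, by module⟩
  have := (mem_extremePoints.1 hx).2 _ hminus _ hplus hseg |>.2
  rw [add_eq_left, smul_eq_zero] at this
  exact this.elim (half_pos hε).ne' hd

lemma sum_smul_centerMass {R α E : Type*} [Field R] [LinearOrder R] [IsStrictOrderedRing R]
    [AddCommGroup E] [Module R E] {t : Finset α} {w : α → R} (z : α → E) (hw : ∀ i ∈ t, 0 ≤ w i) :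
    (∑ i ∈ t, w i) • t.centerMass w z = ∑ i ∈ t, w i • z i := by
  by_cases h : ∑ i ∈ t, w i = 0
  · rw [h, zero_smul]
    exact (sum_eq_zero fun i hi => by rw [(sum_eq_zero_iff_of_nonneg hw).1 h i hi, zero_smul]).symm
  · rw [centerMass, smul_inv_smul₀ h]

lemma sum_filter_iff_eq_ite {R κ : Type*} [Ring R] [Fintype κ] {w : κ → R} (hw : ∑ k, w k = 1)
    (p : κ → Prop) [DecidablePred p] (P : Prop) [Decidable P] :
    ∑ k ∈ univ.filter (fun k => p k ↔ P), w k =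
      if P then ∑ k ∈ univ.filter p, w k else 1 - ∑ k ∈ univ.filter p, w k := by
  split_ifs with hP
  · simp [hP]
  · rw [← hw, ← sum_filter_add_sum_filter_not univ p]
    simp [hP]

lemma mem_iff_val_lt_card_of_isLowerSet {m : ℕ} {U : Finset (Fin m)}
    (hU : IsLowerSet (U : Set (Fin m))) (j : Fin m) : j ∈ U ↔ (j : ℕ) < #U := by
  constructor
  · intro hj
    have := card_le_card fun i (hi : i ∈ Iic j) => hU (mem_Iic.1 hi) hj
    rw [Fin.card_Iic] at this
    omega
  · intro hj
    by_contra hjU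
    have := card_le_card fun i (hi : i ∈ U) =>
      mem_Iio.2 (not_le.1 fun hji => hjU (hU hji hi))
    rw [Fin.card_Iio] at this
    omega

section ParityPolytope

variable {ι : Type*} [Fintype ι] [DecidableEq ι]

/-- On the unit cube, the `ℓ¹`-distance from `t` to the indicator vector of `F`. -/
def parityGap (t : ι → ℝ) (F : Finset ι) : ℝ := ∑ i ∈ Fᶜ, t i + ∑ i ∈ F, (1 - t i)

def cutForm (F : Finset ι) (d : ι → ℝ) : ℝ := ∑ i, if i ∈ F then -d i else d i

variable (ι) in
def parityPolytope : Set (ι → ℝ) :=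
  {t | (∀ i, 0 ≤ t i ∧ t i ≤ 1) ∧ ∀ F : Finset ι, Odd #F → 1 ≤ parityGap t F}

variable (ι) in
def evenIndicators : Set (ι → ℝ) :=
  {t | ∃ S : Finset ι, Even #S ∧ t = fun i => if i ∈ S then 1 else 0}

lemma parityGap_eq_sum (t : ι → ℝ) (F : Finset ι) :
    parityGap t F = ∑ i, if i ∈ F then 1 - t i else t i := by
  rw [parityGap, ← sum_compl_add_sum F]
  congr 1
  · exact sum_congr rfl fun i hi => (if_neg (mem_compl.1 hi)).symm
  · exact sum_congr rfl fun i hi => (if_pos hi).symm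

lemma parityGap_add_smul (t d : ι → ℝ) (s : ℝ) (F : Finset ι) :
    parityGap (t + s • d) F = parityGap t F + s * cutForm F d := by
  simp only [parityGap_eq_sum, cutForm, mul_sum, ← sum_add_distrib]
  refine sum_congr rfl fun i _ => ?_
  simp only [Pi.add_apply, Pi.smul_apply, smul_eq_mul]
  split_ifs <;> ring

lemma cutForm_sub (F : Finset ι) (d e : ι → ℝ) :
    cutForm F (d - e) = cutForm F d - cutForm F e := by
  simp only [cutForm, ← sum_sub_distrib, Pi.sub_apply]
  exact sum_congr rfl fun i _ => by split_ifs <;> ring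

lemma cutForm_single (F : Finset ι) (p : ι) (a : ℝ) :
    cutForm F (Pi.single p a) = if p ∈ F then -a else a := by
  rw [cutForm, sum_eq_single p (fun i _ hi => by simp [hi]) (by simp)]
  simp

lemma cutForm_eq_neg (F G : Finset ι) {d : ι → ℝ} (h : ∀ i, d i ≠ 0 → (i ∈ F ↔ i ∉ G)) :
    cutForm F d = -cutForm G d := by
  rw [cutForm, cutForm, ← sum_neg_distrib]
  refine sum_congr rfl fun i _ => ?_
  by_cases hdi : d i = 0
  · simp [hdi]
  · by_cases hG : i ∈ G <;> simp [hG, (h i hdi).2, (h i hdi).1.mt]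

lemma one_le_parityGap_indicator {S F : Finset ι} (hSF : S ≠ F) :
    1 ≤ parityGap (fun i => if i ∈ S then 1 else 0) F := by
  obtain ⟨i, hi⟩ : ∃ i, ¬(i ∈ S ↔ i ∈ F) := by
    by_contra! h
    exact hSF (ext h)
  rw [parityGap_eq_sum]
  refine le_trans ?_ (single_le_sum (f := fun i => if i ∈ F then 1 - (if i ∈ S then 1 else 0)
    else if i ∈ S then (1 : ℝ) else 0) (fun j _ => by split_ifs <;> norm_num) (mem_univ i))
  by_cases hS : i ∈ S <;> simp_all

lemma evenIndicators_subset_parityPolytope : evenIndicators ι ⊆ parityPolytope ι := by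
  rintro _ ⟨S, hS, rfl⟩
  refine ⟨fun i => by dsimp only; split_ifs <;> norm_num, fun F hF => one_le_parityGap_indicator ?_⟩
  rintro rfl
  exact Nat.not_even_iff_odd.2 hF hS

lemma finite_evenIndicators : (evenIndicators ι).Finite :=
  (Set.finite_range fun S : Finset ι => fun i => if i ∈ S then (1 : ℝ) else 0).subset
    fun _ ⟨S, _, hS⟩ => ⟨S, hS.symm⟩

lemma convex_parityPolytope : Convex ℝ (parityPolytope ι) := by
  intro t ht u hu a b ha hb hab
  have hgap : ∀ F, parityGap (a • t + b • u) F = a * parityGap t F + b * parityGap u F := by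
    intro F
    simp only [parityGap_eq_sum, mul_sum, ← sum_add_distrib]
    refine sum_congr rfl fun i _ => ?_
    simp only [Pi.add_apply, Pi.smul_apply, smul_eq_mul]
    split_ifs
    · linear_combination -hab
    · ring
  refine ⟨fun i => ?_, fun F hF => ?_⟩
  · simp only [Pi.add_apply, Pi.smul_apply, smul_eq_mul]
    have := ht.1 i
    have := hu.1 i
    constructor <;> nlinarith
  · rw [hgap]
    have := ht.2 F hF
    have := hu.2 F hF
    nlinarith

lemma isCompact_parityPolytope : IsCompact (parityPolytope ι) := by
  refine (isCompact_univ_pi fun _ => isCompact_Icc (a := (0 : ℝ)) (b := 1)).of_isClosed_subset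
    ?_ fun t ht i _ => ht.1 i
  have hgap : ∀ F : Finset ι, Continuous fun t : ι → ℝ => parityGap t F := fun F => by
    unfold parityGap; fun_prop
  simp only [parityPolytope, Set.ofPred_and, Set.ofPred_forall]
  exact (isClosed_iInter fun i => (isClosed_le continuous_const (continuous_apply i)).inter
    (isClosed_le (continuous_apply i) continuous_const)).inter
    (isClosed_iInter fun F => isClosed_iInter fun _ => isClosed_le continuous_const (hgap F))

lemma eventually_add_smul_mem_parityPolytope {t d : ι → ℝ} (ht : t ∈ parityPolytope ι)
    (hd : ∀ i, d i ≠ 0 → 0 < t i ∧ t i < 1)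
    (htight : ∀ F : Finset ι, Odd #F → parityGap t F = 1 → cutForm F d = 0) :
    ∀ᶠ s in 𝓝 (0 : ℝ), t + s • d ∈ parityPolytope ι := by
  have hlim : ∀ a b : ℝ, Tendsto (fun s : ℝ => a + s * b) (𝓝 0) (𝓝 a) := fun a b => by
    simpa using (Continuous.tendsto (by fun_prop) 0 : Tendsto (fun s : ℝ => a + s * b) _ _)
  refine (eventually_all.2 fun i => ?_).and (eventually_all.2 fun F => ?_)
  · simp only [Pi.add_apply, Pi.smul_apply, smul_eq_mul]
    by_cases hdi : d i = 0
    · simpa [hdi] using ht.1 i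
    · obtain ⟨h0, h1⟩ := hd i hdi
      exact ((hlim _ _).eventually (Ioo_mem_nhds h0 h1)).mono fun s hs => ⟨hs.1.le, hs.2.le⟩
  · by_cases hF : Odd #F
    · simp only [parityGap_add_smul, hF, forall_const]
      rcases (ht.2 F hF).eq_or_lt with h | h
      · simp [← h, htight F hF h.symm]
      · exact ((hlim _ _).eventually (lt_mem_nhds h)).mono fun s hs => hs.le
    · exact Eventually.of_forall fun s h => absurd h hF

/-- The two gaps add up to at least `#(F ∆ G) ≥ 2`, with equality only if every coordinate
outside `F ∆ G` is `0` or `1`. -/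
lemma mem_iff_notMem_of_parityGap_eq_one {t : ι → ℝ} (ht : ∀ i, 0 ≤ t i ∧ t i ≤ 1)
    {F G : Finset ι} (hFG : F ≠ G) (hF : Odd #F) (hG : Odd #G)
    (htF : parityGap t F = 1) (htG : parityGap t G = 1) {i : ι} (hi0 : 0 < t i) (hi1 : t i < 1) :
    i ∈ F ↔ i ∉ G := by
  set D := (F ∪ G) \ (F ∩ G)
  have hD : 2 ≤ #D := by
    have hcard : #D + #(F ∩ G) = #(F ∪ G) := card_sdiff_add_card_eq_card inter_subset_union
    have hne : D.Nonempty := by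
      rw [nonempty_iff_ne_empty, Ne, sdiff_eq_empty_iff_subset]
      exact fun h => hFG (subset_antisymm (subset_union_left.trans h |>.trans inter_subset_right)
        (subset_union_right.trans h |>.trans inter_subset_left))
    have := card_union_add_card_inter F G
    have := hne.card_pos
    obtain ⟨a, ha⟩ := hF
    obtain ⟨b, hb⟩ := hG
    omega
  by_contra hiD
  have hi : i ∉ D := by simp only [D, Finset.mem_sdiff, mem_union, mem_inter]; tauto
  set g : ι → ℝ := fun j => (if j ∈ F then 1 - t j else t j) + (if j ∈ G then 1 - t j else t j)
  have hsum : ∑ j, g j = 2 := by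
    rw [sum_add_distrib, ← parityGap_eq_sum, ← parityGap_eq_sum, htF, htG]
    norm_num
  have hg_nonneg : ∀ j, 0 ≤ g j := fun j => by
    have := ht j
    simp only [g]
    split_ifs <;> linarith
  have hgD : ∀ j ∈ D, g j = 1 := fun j hj => by
    simp only [D, Finset.mem_sdiff, mem_union, mem_inter] at hj
    simp only [g]
    split_ifs <;> first | tauto | ring
  have hgi : 0 < g i := by
    simp only [g]
    split_ifs <;> linarith
  have := sum_le_sum_of_subset_of_nonneg (subset_univ (insert i D)) fun j _ _ => hg_nonneg j
  rw [sum_insert hi, sum_congr rfl hgD, hsum, sum_const, nsmul_one] at this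
  have : (2 : ℝ) ≤ #D := by exact_mod_cast hD
  linarith

lemma parityGap_ne_one_of_unique_fractional {t : ι → ℝ} {p : ι} (hp0 : 0 < t p) (hp1 : t p < 1)
    (hbin : ∀ i ≠ p, t i = 0 ∨ t i = 1) (F : Finset ι) : parityGap t F ≠ 1 := by
  set a : ι → ℝ := fun i => if i ∈ F then 1 - t i else t i
  have ha : ∀ i ∈ univ.erase p, a i = if a i = 1 then 1 else 0 := fun i hi => by
    rcases hbin i (ne_of_mem_erase hi) with h | h <;> by_cases hF : i ∈ F <;> simp [a, h, hF]
  have hap : 0 < a p ∧ a p < 1 := by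
    simp only [a]
    split_ifs <;> constructor <;> linarith
  rw [parityGap_eq_sum, ← add_sum_erase _ _ (mem_univ p), sum_congr rfl ha, sum_boole]
  intro h
  rcases Nat.eq_zero_or_pos #{i ∈ univ.erase p | a i = 1} with hn | hn
  · rw [hn, Nat.cast_zero] at h
    linarith
  · have : (1 : ℝ) ≤ #{i ∈ univ.erase p | a i = 1} := by exact_mod_cast hn
    linarith

lemma mem_evenIndicators_of_binary {t : ι → ℝ} (ht : t ∈ parityPolytope ι)
    (hbin : ∀ i, t i = 0 ∨ t i = 1) : t ∈ evenIndicators ι := by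
  set S := univ.filter fun i => t i = 1
  have htS : t = fun i => if i ∈ S then 1 else 0 := funext fun i => by
    rcases hbin i with h | h <;> simp [S, h]
  refine ⟨S, Nat.not_odd_iff_even.1 fun hS => ?_, htS⟩
  have := ht.2 S hS
  rw [htS, parityGap_eq_sum, sum_eq_zero fun i _ => by split_ifs <;> norm_num] at this
  norm_num at this

lemma notMem_extremePoints_parityPolytope_of_two_fractional {t : ι → ℝ}
    (ht : t ∈ parityPolytope ι) {p q : ι} (hqp : q ≠ p) (hp0 : 0 < t p) (hp1 : t p < 1)
    (hq0 : 0 < t q) (hq1 : t q < 1) {F₀ : Finset ι} (hF₀ : Odd #F₀) (htF₀ : parityGap t F₀ = 1) :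
    t ∉ (parityPolytope ι).extremePoints ℝ := by
  -- `d` keeps `F₀` tight, and every other tight odd set separates both `p` and `q` from `F₀`.
  set c : ι → ℝ := fun i => if i ∈ F₀ then -1 else 1
  set d : ι → ℝ := Pi.single p (c q) - Pi.single q (c p)
  have hd : ∀ i, d i ≠ 0 → 0 < t i ∧ t i < 1 := fun i hi => by
    by_cases hip : i = p
    · exact hip ▸ ⟨hp0, hp1⟩
    by_cases hiq : i = q
    · exact hiq ▸ ⟨hq0, hq1⟩
    simp [d, hip, hiq] at hi
  have hF₀d : cutForm F₀ d = 0 := by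
    simp only [d, cutForm_sub, cutForm_single, c]
    split_ifs <;> norm_num
  refine notMem_extremePoints_of_eventually_add_smul_mem (d := d) (fun h0 => ?_)
    (eventually_add_smul_mem_parityPolytope ht hd fun F hF htF => ?_)
  · have := congrFun h0 p
    simp only [d, c, Pi.sub_apply, Pi.single_eq_same, Pi.single_eq_of_ne hqp.symm] at this
    split_ifs at this <;> norm_num at this
  · rcases eq_or_ne F F₀ with rfl | hFF₀
    · exact hF₀d
    · rw [cutForm_eq_neg F F₀ fun i hi => mem_iff_notMem_of_parityGap_eq_one ht.1 hFF₀ hF hF₀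
        htF htF₀ (hd i hi).1 (hd i hi).2, hF₀d, neg_zero]

lemma notMem_extremePoints_parityPolytope_of_fractional {t : ι → ℝ} (ht : t ∈ parityPolytope ι)
    {p : ι} (hp0 : 0 < t p) (hp1 : t p < 1) : t ∉ (parityPolytope ι).extremePoints ℝ := by
  by_cases htight : ∃ F₀ : Finset ι, Odd #F₀ ∧ parityGap t F₀ = 1
  · obtain ⟨F₀, hF₀, htF₀⟩ := htight
    by_cases hq : ∃ q ≠ p, 0 < t q ∧ t q < 1
    · obtain ⟨q, hqp, hq0, hq1⟩ := hq
      exact notMem_extremePoints_parityPolytope_of_two_fractional ht hqp hp0 hp1 hq0 hq1 hF₀ htF₀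
    · push Not at hq
      refine absurd htF₀ (parityGap_ne_one_of_unique_fractional hp0 hp1 (fun i hip => ?_) F₀)
      by_contra! h
      exact (hq i hip ((ht.1 i).1.lt_of_ne' h.1)).not_gt ((ht.1 i).2.lt_of_ne h.2)
  · push Not at htight
    refine notMem_extremePoints_of_eventually_add_smul_mem (d := Pi.single p 1) (by simp)
      (eventually_add_smul_mem_parityPolytope ht (fun i hi => ?_)
        fun F hF htF => absurd htF (htight F hF))
    obtain rfl : i = p := by by_contra h; simp [h] at hi
    exact ⟨hp0, hp1⟩

lemma extremePoints_parityPolytope_subset :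
    (parityPolytope ι).extremePoints ℝ ⊆ evenIndicators ι := by
  intro t ht
  refine mem_evenIndicators_of_binary ht.1 fun i => ?_
  by_contra! h
  exact notMem_extremePoints_parityPolytope_of_fractional ht.1 ((ht.1.1 i).1.lt_of_ne' h.1)
    ((ht.1.1 i).2.lt_of_ne h.2) ht

theorem parityPolytope_eq_convexHull : parityPolytope ι = convexHull ℝ (evenIndicators ι) := by
  refine subset_antisymm ?_ (convexHull_min evenIndicators_subset_parityPolytope
    convex_parityPolytope)
  rw [← closure_convexHull_extremePoints isCompact_parityPolytope convex_parityPolytope,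
    ← (finite_evenIndicators.isClosed_convexHull (𝕜 := ℝ)).closure_eq]
  exact closure_mono (convexHull_mono extremePoints_parityPolytope_subset)

end ParityPolytope

section OrderedPolytope

variable {m : ℕ}

def ordPolytope (m : ℕ) : Set (Fin m → ℝ) :=
  {y | (∀ j, 0 ≤ y j ∧ y j ≤ 1) ∧ ∀ j j' : Fin m, j ≤ j' → y j' ≤ y j}

def stepVec (m s : ℕ) : Fin m → ℝ := fun j => if (j : ℕ) < s then 1 else 0

@[simps]
def altSumₗ (m : ℕ) : (Fin m → ℝ) →ₗ[ℝ] ℝ where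
  toFun := altSum
  map_add' y z := by simp only [altSum, Pi.add_apply, mul_add, sum_add_distrib]
  map_smul' c y := by
    simp only [altSum, Pi.smul_apply, smul_eq_mul, mul_sum, RingHom.id_apply]
    ring_nf

lemma convex_ordPolytope (m : ℕ) : Convex ℝ (ordPolytope m) := by
  intro y hy z hz a b ha hb hab
  simp only [ordPolytope, Set.mem_ofPred_eq, Pi.add_apply, Pi.smul_apply, smul_eq_mul]
  refine ⟨fun j => ?_, fun j j' hjj' => ?_⟩
  · have := hy.1 j
    have := hz.1 j
    constructor <;> nlinarith
  · have := hy.2 j j' hjj'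
    have := hz.2 j j' hjj'
    nlinarith

lemma stepVec_mem_ordPolytope (m s : ℕ) : stepVec m s ∈ ordPolytope m := by
  refine ⟨fun j => by unfold stepVec; split_ifs <;> norm_num, fun j j' hjj' => ?_⟩
  unfold stepVec
  split_ifs <;> norm_num
  omega

lemma altSum_stepVec {s : ℕ} (hs : s ≤ m) : altSum (stepVec m s) = if Odd s then 1 else 0 := by
  have hfilter : (range m).filter (· < s) = range s := by
    ext j
    simp only [mem_filter, mem_range]
    omega
  simp only [altSum, stepVec]
  rw [Fin.sum_univ_eq_sum_range (fun j => (-1 : ℝ) ^ j * if j < s then 1 else 0)]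
  simp only [mul_ite, mul_one, mul_zero]
  rw [← sum_filter, hfilter, neg_one_geom_sum]
  by_cases h : Even s <;> simp [h]

lemma ncard_stepVec_eq_one {s : ℕ} (hs : s ≤ m) : {j | stepVec m s j = 1}.ncard = s := by
  have : {j | stepVec m s j = 1} = ↑(univ.filter fun j : Fin m => (j : ℕ) < s) := by
    ext j
    simp [stepVec]
  rw [this, Set.ncard_coe_finset, Fin.card_filter_val_lt, min_eq_right hs]

lemma exists_eq_stepVec {y : Fin m → ℝ} (hbin : ∀ j, y j = 0 ∨ y j = 1)
    (hanti : ∀ j j' : Fin m, j ≤ j' → y j' ≤ y j) : ∃ s ≤ m, y = stepVec m s := by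
  set U := univ.filter fun j => y j = 1
  have hU : IsLowerSet (U : Set (Fin m)) := fun j' j hjj' hj' => by
    simp only [U, coe_filter, mem_univ, true_and, Set.mem_ofPred_eq] at hj' ⊢
    have := hanti j j' hjj'
    rcases hbin j with h | h
    · linarith
    · exact h
  refine ⟨#U, card_le_univ U |>.trans_eq (Fintype.card_fin m), funext fun j => ?_⟩
  simp only [stepVec, ← mem_iff_val_lt_card_of_isLowerSet hU, U, mem_filter, mem_univ, true_and]
  rcases hbin j with h | h <;> simp [h]

/-- `y` shifted by one place, extended by `1` on the left and by `0` on the right; its successive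
differences are the barycentric coordinates of `y` with respect to the step vectors. -/
def ordExt (y : Fin m → ℝ) : ℕ → ℝ
  | 0 => 1
  | s + 1 => if h : s < m then y ⟨s, h⟩ else 0

def stepWeight (y : Fin m → ℝ) (s : ℕ) : ℝ := ordExt y s - ordExt y (s + 1)

lemma stepWeight_nonneg {y : Fin m → ℝ} (hy : y ∈ ordPolytope m) (s : ℕ) :
    0 ≤ stepWeight y s := by
  obtain ⟨hbound, hanti⟩ := hy
  rw [stepWeight, sub_nonneg]
  rcases s with _ | s
  · by_cases h : 0 < m
    · simpa [ordExt, h] using (hbound _).2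
    · simp [ordExt, h]
  · by_cases h : s + 1 < m
    · simpa [ordExt, h, (Nat.lt_succ_self s).trans h] using
        hanti ⟨s, by omega⟩ ⟨s + 1, h⟩ (by simp)
    · by_cases h' : s < m
      · simpa [ordExt, h, h'] using (hbound _).1
      · simp [ordExt, h, h']

lemma sum_stepWeight (y : Fin m → ℝ) : ∑ s ∈ range (m + 1), stepWeight y s = 1 := by
  simp only [stepWeight]
  rw [sum_range_sub']
  simp [ordExt]

lemma sum_stepWeight_smul_stepVec (y : Fin m → ℝ) :
    ∑ s ∈ range (m + 1), stepWeight y s • stepVec m s = y := by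
  ext j
  have hIco : (range (m + 1)).filter (fun s => (j : ℕ) < s) = Ico ((j : ℕ) + 1) (m + 1) := by
    ext s
    simp only [mem_filter, mem_range, mem_Ico]
    omega
  simp only [Finset.sum_apply, Pi.smul_apply, stepVec, smul_eq_mul, mul_ite, mul_one, mul_zero]
  rw [← sum_filter, hIco]
  have := sum_Ico_sub (f := fun s => -ordExt y s) (by omega : (j : ℕ) + 1 ≤ m + 1)
  simp only [stepWeight, neg_sub_neg] at this ⊢
  rw [this]
  simp [ordExt]

lemma altSum_eq_sum_stepWeight (y : Fin m → ℝ) :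
    altSum y = ∑ s ∈ (range (m + 1)).filter Odd, stepWeight y s := by
  conv_lhs => rw [← sum_stepWeight_smul_stepVec y]
  change altSumₗ m _ = _
  rw [map_sum, sum_filter]
  refine sum_congr rfl fun s hs => ?_
  rw [map_smul, altSumₗ_apply, altSum_stepVec (by simpa [Nat.lt_succ_iff] using hs), smul_eq_mul]
  split_ifs <;> simp

lemma altSum_mem_Icc {y : Fin m → ℝ} (hy : y ∈ ordPolytope m) : altSum y ∈ Set.Icc 0 1 := by
  rw [altSum_eq_sum_stepWeight]
  refine ⟨sum_nonneg fun s _ => stepWeight_nonneg hy s, ?_⟩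
  rw [← sum_stepWeight y]
  exact sum_le_sum_of_subset_of_nonneg (filter_subset _ _) fun s _ _ => stepWeight_nonneg hy s

lemma sum_stepWeight_parity (y : Fin m → ℝ) (P : Prop) [Decidable P] :
    ∑ s ∈ (range (m + 1)).filter (fun s => Odd s ↔ P), stepWeight y s =
      if P then altSum y else 1 - altSum y := by
  rw [altSum_eq_sum_stepWeight]
  split_ifs with hP
  · simp [hP]
  · rw [← sum_stepWeight y, ← sum_filter_add_sum_filter_not (range (m + 1)) Odd]
    simp [hP]

/-- Junk value `0` when `y` puts no weight on the step vectors `e_s` with `Odd s ↔ P`. -/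
noncomputable def parityCenter (y : Fin m → ℝ) (P : Prop) [Decidable P] : Fin m → ℝ :=
  ((range (m + 1)).filter fun s => Odd s ↔ P).centerMass (stepWeight y) (stepVec m)

lemma parityCenter_congr (y : Fin m → ℝ) {P Q : Prop} [Decidable P] [Decidable Q] (h : P ↔ Q) :
    parityCenter y P = parityCenter y Q := by
  obtain rfl := propext h
  congr

lemma parityCenter_mem_convexHull {y : Fin m → ℝ} (hy : y ∈ ordPolytope m) {P : Prop}
    [Decidable P] (hpos : 0 < if P then altSum y else 1 - altSum y) :
    parityCenter y P ∈ convexHull ℝ (stepVec m '' {s | s ≤ m ∧ (Odd s ↔ P)}) := by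
  refine centerMass_mem_convexHull _ (fun s _ => stepWeight_nonneg hy s)
    (by rwa [sum_stepWeight_parity]) fun s hs => ⟨s, ?_, rfl⟩
  simp only [mem_filter, mem_range] at hs
  exact ⟨by omega, hs.2⟩

lemma eq_smul_parityCenter_add {y : Fin m → ℝ} (hy : y ∈ ordPolytope m) :
    y = altSum y • parityCenter y True + (1 - altSum y) • parityCenter y False := by
  have hcenter : ∀ (P : Prop) [Decidable P],
      (if P then altSum y else 1 - altSum y) • parityCenter y P =
        ∑ s ∈ (range (m + 1)).filter (fun s => Odd s ↔ P), stepWeight y s • stepVec m s :=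
    fun P _ => by
      rw [← sum_stepWeight_parity]
      exact sum_smul_centerMass _ fun s _ => stepWeight_nonneg hy s
  have h1 := hcenter True
  have h0 := hcenter False
  simp only [if_true, if_false, iff_true, iff_false] at h1 h0
  rw [h1, h0, sum_filter_add_sum_filter_not, sum_stepWeight_smul_stepVec]

lemma sum_smul_parityCenter {κ : Type*} [Fintype κ] {w : κ → ℝ} (hw : ∑ k, w k = 1)
    {y : Fin m → ℝ} (hy : y ∈ ordPolytope m) (p : κ → Prop) [DecidablePred p]
    (hp : ∑ k ∈ univ.filter p, w k = altSum y) :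
    ∑ k, w k • parityCenter y (p k) = y := by
  have hsplit : ∀ (P : Prop) [Decidable P],
      ∑ k ∈ univ.filter (fun k => p k ↔ P), w k • parityCenter y (p k) =
        (if P then altSum y else 1 - altSum y) • parityCenter y P := fun P _ => by
    rw [← hp, ← sum_filter_iff_eq_ite hw, sum_smul]
    exact sum_congr rfl fun k hk => by rw [parityCenter_congr _ (mem_filter.1 hk).2]
  have h1 := hsplit True
  have h0 := hsplit False
  simp only [iff_true, iff_false, if_true, if_false] at h1 h0
  rw [← sum_filter_add_sum_filter_not univ p, h1, h0]
  exact (eq_smul_parityCenter_add hy).symm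

end OrderedPolytope

section OrderedParityPolytope

variable {ι : Type*} [Fintype ι]

def ordVertices (r : ι → ℕ) : Set (∀ i, Fin (r i) → ℝ) :=
  {x | (∀ i j, x i j = 0 ∨ x i j = 1) ∧ (∀ i, ∀ j j' : Fin (r i), j ≤ j' → x i j' ≤ x i j) ∧
    Even (∑ i, {j : Fin (r i) | x i j = 1}.ncard)}

lemma mem_ordVertices_iff {r : ι → ℕ} {x : ∀ i, Fin (r i) → ℝ} :
    x ∈ ordVertices r ↔
      ∃ s : ι → ℕ, (∀ i, s i ≤ r i) ∧ Even (∑ i, s i) ∧ x = fun i => stepVec (r i) (s i) := by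
  constructor
  · rintro ⟨hbin, hanti, heven⟩
    choose s hs hx using fun i => exists_eq_stepVec (hbin i) (hanti i)
    refine ⟨s, hs, ?_, funext hx⟩
    simpa only [hx, ncard_stepVec_eq_one (hs _)] using heven
  · rintro ⟨s, hs, heven, rfl⟩
    refine ⟨fun i j => ?_, fun i => (stepVec_mem_ordPolytope _ _).2, ?_⟩
    · unfold stepVec
      dsimp only
      split_ifs <;> simp
    · simpa only [ncard_stepVec_eq_one (hs _)] using heven

lemma pi_stepVec_parity_subset_ordVertices {r : ι → ℕ} {S : Finset ι} (hS : Even #S) :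
    Set.univ.pi (fun i => stepVec (r i) '' {s | s ≤ r i ∧ (Odd s ↔ i ∈ S)}) ⊆
      ordVertices r := by
  intro x hx
  choose s hs hx using fun i => hx i (Set.mem_univ i)
  refine mem_ordVertices_iff.2 ⟨s, fun i => (hs i).1, ?_, funext fun i => (hx i).symm⟩
  rw [even_sum_iff_even_card_odd]
  convert hS
  ext i
  simp [(hs i).2]

variable [DecidableEq ι]

def ordParityPolytope (r : ι → ℕ) : Set (∀ i, Fin (r i) → ℝ) :=
  {x | (∀ i, x i ∈ ordPolytope (r i)) ∧
    ∀ F : Finset ι, Odd #F → 1 ≤ parityGap (fun i => altSum (x i)) F}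

lemma mem_ordParityPolytope_iff {r : ι → ℕ} {x : ∀ i, Fin (r i) → ℝ} :
    x ∈ ordParityPolytope r ↔
      (∀ i, x i ∈ ordPolytope (r i)) ∧ (fun i => altSum (x i)) ∈ parityPolytope ι :=
  ⟨fun hx => ⟨hx.1, fun i => altSum_mem_Icc (hx.1 i), hx.2⟩, fun hx => ⟨hx.1, hx.2.2⟩⟩

lemma convex_ordParityPolytope (r : ι → ℕ) : Convex ℝ (ordParityPolytope r) := by
  let L : (∀ i, Fin (r i) → ℝ) →ₗ[ℝ] ι → ℝ :=
    LinearMap.pi fun i => altSumₗ (r i) ∘ₗ LinearMap.proj i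
  have : ordParityPolytope r =
      (Set.univ.pi fun i => ordPolytope (r i)) ∩ L ⁻¹' parityPolytope ι := by
    ext x
    simp only [mem_ordParityPolytope_iff, Set.mem_inter_iff, Set.mem_univ_pi, Set.mem_preimage]
    rfl
  rw [this]
  exact (convex_pi fun i _ => convex_ordPolytope (r i)).inter
    (convex_parityPolytope.linear_preimage L)

lemma ordVertices_subset_ordParityPolytope (r : ι → ℕ) :
    ordVertices r ⊆ ordParityPolytope r := by
  intro x hx
  obtain ⟨s, hs, heven, rfl⟩ := mem_ordVertices_iff.1 hx
  refine mem_ordParityPolytope_iff.2 ⟨fun i => stepVec_mem_ordPolytope _ _,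
    evenIndicators_subset_parityPolytope ⟨univ.filter fun i => Odd (s i), ?_, funext fun i => ?_⟩⟩
  · exact (even_sum_iff_even_card_odd s).1 heven
  · simp [altSum_stepVec (hs i)]

theorem ordParityPolytope_subset_convexHull (r : ι → ℕ) :
    ordParityPolytope r ⊆ convexHull ℝ (ordVertices r) := by
  intro x hx
  obtain ⟨hblock, ht⟩ := mem_ordParityPolytope_iff.1 hx
  rw [parityPolytope_eq_convexHull, mem_convexHull_iff_exists_fintype] at ht
  obtain ⟨κ, _, w, z, hw₀, hw₁, hz, htw⟩ := ht
  choose S hS hzS using hz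
  have hweight : ∀ i, ∑ k ∈ univ.filter (fun k => i ∈ S k), w k = altSum (x i) := fun i => by
    rw [← congrFun htw i, Finset.sum_apply, sum_filter]
    exact sum_congr rfl fun k _ => by simp [hzS k]
  set Z : κ → ∀ i, Fin (r i) → ℝ := fun k i => parityCenter (x i) (i ∈ S k)
  have hx_eq : ∑ k, w k • Z k = x := funext fun i => by
    rw [Finset.sum_apply]
    exact sum_smul_parityCenter hw₁ (hblock i) _ (hweight i)
  have hZ : ∀ k, w k ≠ 0 → Z k ∈ convexHull ℝ (ordVertices r) := fun k hk => by
    refine convexHull_mono (pi_stepVec_parity_subset_ordVertices (hS k))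
      (mem_convexHull_pi fun i _ => parityCenter_mem_convexHull (hblock i) ?_)
    rw [← hweight, ← sum_filter_iff_eq_ite hw₁]
    exact ((hw₀ k).lt_of_ne' hk).trans_le
      (single_le_sum (fun j _ => hw₀ j) (mem_filter.2 ⟨mem_univ k, Iff.rfl⟩))
  rw [← hx_eq, ← sum_filter_of_ne (p := fun k => w k ≠ 0) fun k _ h => left_ne_zero_of_smul h]
  exact (convex_convexHull ℝ _).sum_mem (fun k _ => hw₀ k) (by rw [sum_filter_ne_zero, hw₁])
    fun k hk => hZ k (mem_filter.1 hk).2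

end OrderedParityPolytope

/-- outer description of the ordered even parity polytope. -/
theorem stmt7 (k : ℕ) (r : Fin k → ℕ) :
    convexHull ℝ
      {x : ∀ i, Fin (r i) → ℝ |
        (∀ i j, x i j = 0 ∨ x i j = 1) ∧
        (∀ i, ∀ j j' : Fin (r i), j ≤ j' → x i j' ≤ x i j) ∧
        Even (∑ i, {j : Fin (r i) | x i j = 1}.ncard)} =
      {x : ∀ i, Fin (r i) → ℝ |
        (∀ i, (∀ j, 0 ≤ x i j ∧ x i j ≤ 1) ∧
          ∀ j j' : Fin (r i), j ≤ j' → x i j' ≤ x i j) ∧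
        ∀ F : Finset (Fin k), Odd F.card →
          1 ≤ ∑ i ∈ Fᶜ, altSum (x i) + ∑ i ∈ F, (1 - altSum (x i))} := by
  change convexHull ℝ (ordVertices r) = ordParityPolytope r
  exact subset_antisymm
    (convexHull_min (ordVertices_subset_ordParityPolytope r) (convex_ordParityPolytope r))
    (ordParityPolytope_subset_convexHull r)
end

section
/- Separation by a minimizing odd set: Let lambda in [0,1]^k. Among all subsets F of [k] with |F| odd, the minimum of g(F) := sum_{i in [k]\F} lambda_i + sum_{i in F} (1 - lambda_i) is attained as follows: let F' := { i in [k] : lambda_i > 1/2 }. If |F'| is odd, then F = F' minimizes g. Otherwise, F = F' symmetric-difference {i*} minimizes g, where i* in [k] is an index minimizing |lambda_{i*} - 1/2|. -/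
open Finset

lemma aux_card_parity {α : Type*} [DecidableEq α] (s t : Finset α) :
    (symmDiff s t).card + 2 * (s ∩ t).card = s.card + t.card := by
  have h : symmDiff s t = (s \ t) ∪ (t \ s) := by
    ext x; simp only [Finset.mem_symmDiff, Finset.mem_union, Finset.mem_sdiff]
  have hd : Disjoint (s \ t) (t \ s) := by
    rw [Finset.disjoint_left]; intro x hx hx'
    simp at hx hx'; tauto
  rw [h, Finset.card_union_of_disjoint hd]
  have h1 := Finset.card_sdiff_add_card_inter s t
  have h2 := Finset.card_sdiff_add_card_inter t s
  rw [Finset.inter_comm t s] at h2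
  omega

lemma aux_sum_symmDiff {α : Type*} [DecidableEq α] (c : α → ℝ) (F F' : Finset α)
    (h1 : ∀ i ∈ F', c i ≤ 0) (h2 : ∀ i ∉ F', 0 ≤ c i) :
    ∑ i ∈ F, c i = ∑ i ∈ F', c i + ∑ i ∈ symmDiff F F', |c i| := by
  have hsd : symmDiff F F' = (F \ F') ∪ (F' \ F) := by
    ext x; simp only [Finset.mem_symmDiff, Finset.mem_union, Finset.mem_sdiff]
  have hd : Disjoint (F \ F') (F' \ F) := by
    rw [Finset.disjoint_left]; intro x hx hx'
    simp at hx hx'; tauto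
  have e1 : ∑ i ∈ F, c i = ∑ i ∈ F ∩ F', c i + ∑ i ∈ F \ F', c i := by
    rw [← Finset.sum_inter_add_sum_sdiff]
  have e2 : ∑ i ∈ F', c i = ∑ i ∈ F ∩ F', c i + ∑ i ∈ F' \ F, c i := by
    rw [Finset.inter_comm, ← Finset.sum_inter_add_sum_sdiff]
  have e3 : ∑ i ∈ F \ F', |c i| = ∑ i ∈ F \ F', c i :=
    Finset.sum_congr rfl fun i hi => abs_of_nonneg (h2 i (Finset.mem_sdiff.mp hi).2)
  have e4 : ∑ i ∈ F' \ F, |c i| = -∑ i ∈ F' \ F, c i := by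
    rw [← Finset.sum_neg_distrib]
    exact Finset.sum_congr rfl fun i hi => abs_of_nonpos (h1 i (Finset.mem_sdiff.mp hi).1)
  rw [hsd, Finset.sum_union hd, e3, e4, e1, e2]; ring

/-- separation by a minimizing odd set. -/
theorem stmt10 (k : ℕ) (hk : 1 ≤ k) (lam : Fin k → ℝ)
    (hl : ∀ i, 0 ≤ lam i ∧ lam i ≤ 1) :
    let g : Finset (Fin k) → ℝ := fun F => ∑ i ∈ Fᶜ, lam i + ∑ i ∈ F, (1 - lam i)
    let F' : Finset (Fin k) := Finset.univ.filter (fun i => 1 / 2 < lam i)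
    (Odd F'.card → ∀ F : Finset (Fin k), Odd F.card → g F' ≤ g F) ∧
    (¬ Odd F'.card → ∀ istar : Fin k,
      (∀ j, |lam istar - 1 / 2| ≤ |lam j - 1 / 2|) →
      Odd (symmDiff F' {istar}).card ∧
      ∀ F : Finset (Fin k), Odd F.card → g (symmDiff F' {istar}) ≤ g F) := by
  intro g F'
  set c : Fin k → ℝ := fun i => 1 - 2 * lam i with hc
  have hg : ∀ F : Finset (Fin k), g F = ∑ i, lam i + ∑ i ∈ F, c i := by
    intro F
    have : ∑ i ∈ F, (1 - lam i) = ∑ i ∈ F, lam i + ∑ i ∈ F, c i := by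
      rw [← Finset.sum_add_distrib]; exact Finset.sum_congr rfl fun i _ => by simp [hc]; ring
    simp only [g, this]
    rw [← add_assoc, Finset.sum_compl_add_sum]
  have hF'1 : ∀ i ∈ F', c i ≤ 0 := by
    intro i hi; simp only [F', Finset.mem_filter] at hi; simp [hc]; linarith [hi.2]
  have hF'2 : ∀ i ∉ F', 0 ≤ c i := by
    intro i hi; simp only [F', Finset.mem_filter, Finset.mem_univ, true_and, not_lt] at hi
    simp [hc]; linarith
  have key : ∀ F : Finset (Fin k), g F = g F' + ∑ i ∈ symmDiff F F', |c i| := by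
    intro F
    rw [hg, hg, aux_sum_symmDiff c F F' hF'1 hF'2]; ring
  have habs : ∀ i, |c i| = 2 * |lam i - 1 / 2| := by
    intro i
    have : c i = -(2 * (lam i - 1/2)) := by simp [hc]; ring
    rw [this, abs_neg, abs_mul]; norm_num
  constructor
  · intro _ F _
    rw [key F]
    have : 0 ≤ ∑ i ∈ symmDiff F F', |c i| := Finset.sum_nonneg fun i _ => abs_nonneg _
    linarith
  · intro heven istar histar
    rw [Nat.not_odd_iff_even] at heven
    set F'' := symmDiff F' ({istar} : Finset (Fin k)) with hF''
    have hparF'' : Odd F''.card := by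
      have := aux_card_parity F' ({istar} : Finset (Fin k))
      rw [← hF''] at this
      simp only [Finset.card_singleton] at this
      rcases heven with ⟨m, hm⟩
      rw [Nat.odd_iff]
      omega
    refine ⟨hparF'', fun F hF => ?_⟩
    have hsd : symmDiff F'' F' = {istar} := by
      rw [hF'', symmDiff_comm F' _, symmDiff_symmDiff_cancel_right]
    rw [key F'', key F, hsd]
    have hne : (symmDiff F F').Nonempty := by
      rw [Finset.symmDiff_nonempty]
      intro h
      rw [h] at hF
      exact (Nat.not_odd_iff_even.mpr heven) hF
    obtain ⟨j, hj⟩ := hne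
    have h1 : |c istar| ≤ |c j| := by
      rw [habs, habs]; linarith [histar j]
    have h2 : |c j| ≤ ∑ i ∈ symmDiff F F', |c i| :=
      Finset.single_le_sum (fun i _ => abs_nonneg (c i)) hj
    rw [Finset.sum_singleton]
    linarith
end

section
/- Case 1 of the cheating lemma: Let n in N and z in [0, 1/2). Then the maximum of min(f(x), 1 - f(x)) over all x in R^n with 1 >= x_1 >= ... >= x_n >= 0 and sum_{i=1}^n x_i = z equals z, attained at x = (z, 0, ..., 0). -/
/-- Case 1 of the cheating lemma (`0 ≤ z < 1/2`). -/
theorem stmt12 (n : ℕ) (hn : 1 ≤ n) (z : ℝ) (hz0 : 0 ≤ z) (hz1 : z < 1 / 2) :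
    let S : Set (Fin n → ℝ) :=
      {x | (∀ i, 0 ≤ x i ∧ x i ≤ 1) ∧ (∀ i j : Fin n, i ≤ j → x j ≤ x i) ∧ ∑ i, x i = z}
    let w : Fin n → ℝ := fun i => if (i : ℕ) = 0 then z else 0
    IsGreatest ((fun x => min (altSum x) (1 - altSum x)) '' S) z ∧
    w ∈ S ∧ min (altSum w) (1 - altSum w) = z := by
  intro S w
  have i0 : Fin n := ⟨0, hn⟩
  have hwS : w ∈ S := by
    refine ⟨fun i => ?_, fun i j hij => ?_, ?_⟩
    · by_cases h : (i : ℕ) = 0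
      · simp only [w, h, if_true]; exact ⟨hz0, by linarith⟩
      · simp [w, h]
    · by_cases hj : (j : ℕ) = 0
      · have hi : (i : ℕ) = 0 := Nat.le_antisymm (hj ▸ hij) (Nat.zero_le _)
        simp [w, hi, hj]
      · by_cases hi : (i : ℕ) = 0 <;> simp [w, hi, hj] <;> linarith
    · have : ∀ i : Fin n, ((i : ℕ) = 0) ↔ (i = ⟨0, hn⟩) := by
        intro i; constructor
        · intro h; exact Fin.ext h
        · intro h; simp [h]
      have : w = fun i => if i = (⟨0, hn⟩ : Fin n) then z else 0 := by
        funext i; simp only [w, this i]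
      rw [this, Finset.sum_ite_eq' Finset.univ (⟨0, hn⟩ : Fin n) (fun _ => z)]
      simp
  have hwval : altSum w = z := by
    unfold altSum
    have : ∀ j : Fin n, (-1 : ℝ) ^ (j : ℕ) * w j = w j := by
      intro j
      by_cases h : (j : ℕ) = 0
      · simp [h]
      · simp [w, h]
    rw [Finset.sum_congr rfl (fun j _ => this j)]
    exact hwS.2.2
  have hmin : min (altSum w) (1 - altSum w) = z := by
    rw [hwval]; rw [min_eq_left (by linarith)]
  refine ⟨⟨⟨w, hwS, hmin⟩, ?_⟩, hwS, hmin⟩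
  rintro v ⟨x, ⟨hx1, hx2, hx3⟩, rfl⟩
  have hle : altSum x ≤ z := by
    unfold altSum
    rw [← hx3]
    apply Finset.sum_le_sum
    intro j _
    have h1 : (-1 : ℝ) ^ (j : ℕ) ≤ 1 := by
      rcases Nat.even_or_odd (j : ℕ) with h | h
      · rw [h.neg_one_pow]
      · rw [h.neg_one_pow]; linarith
    calc (-1 : ℝ) ^ (j : ℕ) * x j ≤ 1 * x j :=
          mul_le_mul_of_nonneg_right h1 (hx1 j).1
      _ = x j := one_mul _
  exact le_trans (min_le_left _ _) hle
end

section
/- Case 3 of the cheating lemma: Let n >= 1 and z in [1/2, n - 1/2]. Then there exists x in R^n with 1 >= x_1 >= ... >= x_n >= 0, sum_{i=1}^n x_i = z, and f(x) = 1/2; consequently the maximum of min(f(x), 1 - f(x)) over such x equals 1/2. -/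
/-- Case 3 of the cheating lemma (`1/2 ≤ z ≤ n - 1/2`). -/
theorem stmt14 (n : ℕ) (hn : 1 ≤ n) (z : ℝ)
    (hz0 : 1 / 2 ≤ z) (hz1 : z ≤ (n : ℝ) - 1 / 2) :
    let S : Set (Fin n → ℝ) :=
      {x | (∀ i, 0 ≤ x i ∧ x i ≤ 1) ∧ (∀ i j : Fin n, i ≤ j → x j ≤ x i) ∧ ∑ i, x i = z}
    (∃ x ∈ S, altSum x = 1 / 2) ∧
    IsGreatest ((fun x => min (altSum x) (1 - altSum x)) '' S) (1 / 2) := by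
  intro S
  obtain ⟨k, hkdef⟩ : ∃ k : ℕ, k = (⌊z - 1/2⌋).toNat := ⟨_, rfl⟩
  have hfl : ((k : ℤ) : ℝ) = ((⌊z - 1/2⌋ : ℤ) : ℝ) := by
    rw [hkdef, Int.toNat_of_nonneg (Int.floor_nonneg.mpr (by linarith))]
  have hk1 : (k : ℝ) ≤ z - 1/2 := by
    have h := Int.floor_le (z - 1/2)
    push_cast at hfl
    linarith [hfl ▸ h]
  have hk2 : z - 1/2 < k + 1 := by
    have h := Int.lt_floor_add_one (z - 1/2)
    push_cast at hfl
    linarith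
  have hk3 : k < n := by
    have : (k : ℝ) < n := by linarith
    exact_mod_cast this
  obtain ⟨s, hsdef⟩ : ∃ s : ℝ, s = (z - k + 1/2)/2 := ⟨_, rfl⟩
  obtain ⟨t, htdef⟩ : ∃ t : ℝ, t = (z - k - 1/2)/2 := ⟨_, rfl⟩
  have hs1 : s ≤ 1 := by rw [hsdef]; linarith
  have hs0 : 1/2 ≤ s := by rw [hsdef]; linarith
  have ht0 : 0 ≤ t := by rw [htdef]; linarith
  have ht1 : t ≤ 1/2 := by rw [htdef]; linarith
  have hst : s - t = 1/2 := by rw [hsdef, htdef]; ring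
  obtain ⟨g, hgdef⟩ : ∃ g : ℕ → ℝ,
      g = fun i => if i < k then 1 else if i = k then s else if i = k+1 then t else 0 := ⟨_, rfl⟩
  obtain ⟨x, hxdef⟩ : ∃ x : Fin n → ℝ, x = fun i : Fin n => g i.val := ⟨_, rfl⟩
  have htt : (if k + 1 ∈ Finset.range n then t else 0) = t := by
    by_cases h : k + 1 ∈ Finset.range n
    · simp [h]
    · have hn' : n ≤ k + 1 := by simpa [Finset.mem_range, not_lt] using h
      have hn'' : (n : ℝ) ≤ (k : ℝ) + 1 := by exact_mod_cast hn'
      have : t = 0 := by rw [htdef]; linarith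
      simp [h, this]
  have hkmem : k ∈ Finset.range n := Finset.mem_range.mpr hk3
  have hg : ∀ i, g i = (if i < k then (1:ℝ) else 0) + (if i = k then s else 0)
      + (if i = k+1 then t else 0) := by
    intro i
    rw [hgdef]
    dsimp only
    split_ifs <;> first | (exfalso; omega) | ring
  have hfilter : (Finset.range n).filter (fun i => i < k) = Finset.range k := by
    ext i; simp only [Finset.mem_filter, Finset.mem_range]; omega
  have hsum : ∑ i, x i = z := by
    rw [hxdef, Fin.sum_univ_eq_sum_range (fun i => g i) n]
    rw [Finset.sum_congr rfl (fun i _ => hg i)]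
    rw [Finset.sum_add_distrib, Finset.sum_add_distrib]
    rw [Finset.sum_ite_eq' (Finset.range n) k (fun _ => s),
        Finset.sum_ite_eq' (Finset.range n) (k+1) (fun _ => t)]
    rw [← Finset.sum_filter, hfilter, Finset.sum_const, Finset.card_range, htt]
    simp only [hkmem, if_true, nsmul_eq_mul, mul_one]
    rw [hsdef, htdef]; ring
  have hg2 : ∀ i, (-1:ℝ)^i * g i = (if i < k then (-1:ℝ)^i else 0)
      + (if i = k then (-1:ℝ)^k * s else 0) + (if i = k+1 then (-1:ℝ)^(k+1) * t else 0) := by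
    intro i
    rw [hgdef]
    dsimp only
    split_ifs <;> first | (exfalso; omega) | (subst_vars; ring) | ring
  have htt2 : (if k + 1 ∈ Finset.range n then (-1:ℝ)^(k+1) * t else 0) = (-1:ℝ)^(k+1) * t := by
    by_cases h : k + 1 ∈ Finset.range n
    · simp [h]
    · have h0 : (if k + 1 ∈ Finset.range n then t else 0) = 0 := by simp [h]
      have : t = 0 := by rw [← htt, h0]
      simp [h, this]
  have halt : altSum x = 1/2 := by
    rw [altSum, hxdef]
    rw [Fin.sum_univ_eq_sum_range (fun i => (-1:ℝ)^i * g i) n]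
    rw [Finset.sum_congr rfl (fun i _ => hg2 i)]
    rw [Finset.sum_add_distrib, Finset.sum_add_distrib]
    rw [Finset.sum_ite_eq' (Finset.range n) k (fun _ => (-1:ℝ)^k * s),
        Finset.sum_ite_eq' (Finset.range n) (k+1) (fun _ => (-1:ℝ)^(k+1) * t)]
    rw [← Finset.sum_filter, hfilter, htt2, neg_one_geom_sum]
    simp only [hkmem, if_true]
    rcases Nat.even_or_odd k with he | ho
    · rw [if_pos he, he.neg_one_pow, pow_succ, he.neg_one_pow]
      linarith
    · rw [if_neg (Nat.not_even_iff_odd.mpr ho), ho.neg_one_pow, pow_succ, ho.neg_one_pow]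
      linarith
  have hmem : x ∈ S := by
    refine ⟨?_, ?_, hsum⟩
    · intro i
      rw [hxdef]
      simp only [hgdef]
      split_ifs <;> constructor <;> linarith
    · intro i j hij
      have hij' : (i : ℕ) ≤ (j : ℕ) := hij
      rw [hxdef]
      simp only [hgdef]
      split_ifs <;> first | rfl | (exfalso; omega) | linarith
  constructor
  · exact ⟨x, hmem, halt⟩
  · constructor
    · exact ⟨x, hmem, by show min (altSum x) (1 - altSum x) = 1/2; rw [halt]; norm_num⟩
    · rintro y ⟨w, hw, rfl⟩
      rcases le_or_gt (altSum w) (1/2) with h | h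
      · exact le_trans (min_le_left _ _) h
      · exact le_trans (min_le_right _ _) (by linarith)
end

section
/- Cheating lemma (full statement): Let n in N and z in [0, n]. Then the maximum of min(f(x), 1 - f(x)) over all x in R^n with 1 >= x_1 >= ... >= x_n >= 0 and sum_{i=1}^n x_i = z equals min(z, n - z, 1/2). -/
lemma aux_negsum (k : ℕ) : ∑ j ∈ Finset.range k, ((-1:ℝ))^j = (1 - (-1)^k)/2 := by
  induction k with
  | zero => simp
  | succ k ih => rw [Finset.sum_range_succ, ih, pow_succ]; ring

lemma aux_mem (n : ℕ) (z : ℝ) (hz0 : 0 ≤ z) (hz1 : z ≤ n) (hn : 2 ≤ n) :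
    min z (min ((n : ℝ) - z) (1 / 2)) ∈
      ((fun x : Fin n → ℝ => min (altSum x) (1 - altSum x)) ''
        {x | (∀ i, 0 ≤ x i ∧ x i ≤ 1) ∧ (∀ i j : Fin n, i ≤ j → x j ≤ x i) ∧ ∑ i, x i = z}) := by
  set m := min z (min ((n : ℝ) - z) (1 / 2)) with hm
  have hmz : m ≤ z := min_le_left _ _
  have hmnz : m ≤ (n:ℝ) - z := le_trans (min_le_right _ _) (min_le_left _ _)
  have hmh : m ≤ 1/2 := le_trans (min_le_right _ _) (min_le_right _ _)
  have hm0 : 0 ≤ m := le_min hz0 (le_min (by linarith) (by norm_num))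
  set k : ℕ := (⌈z + m - 2⌉).toNat with hkdef
  have hk1 : z + m - 2 ≤ (k:ℝ) := by
    refine le_trans (Int.le_ceil _) ?_
    exact_mod_cast Int.self_le_toNat _
  have hk2 : (k:ℝ) ≤ z - m := by
    rcases le_or_gt (⌈z + m - 2⌉) 0 with h | h
    · have hk0 : k = 0 := by rw [hkdef, Int.toNat_of_nonpos h]
      rw [hk0]; simpa using by linarith
    · have hke : (k:ℝ) = (⌈z + m - 2⌉ : ℤ) := by
        have := Int.toNat_of_nonneg h.le
        exact_mod_cast congrArg (fun t : ℤ => (t:ℝ)) this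
      have := Int.ceil_lt_add_one (z + m - 2)
      rw [← hke] at this
      linarith
  have hk3 : k + 2 ≤ n := by
    have h1 : (⌈z + m - 2⌉ : ℤ) ≤ (n:ℤ) - 2 := by
      rw [Int.ceil_le]; push_cast; linarith
    have h2 := Int.toNat_le_toNat h1
    omega
  set b : ℝ := (z - k - m)/2 with hbdef
  set a : ℝ := b + m with hadef
  have hb0 : 0 ≤ b := by rw [hbdef]; linarith
  have ha1 : a ≤ 1 := by rw [hadef, hbdef]; linarith
  set w : ℕ → ℝ := fun j => if j < k then 1 else if j = k then a else if j = k+1 then b else 0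
    with hwdef
  have hsplit : ∀ g : ℕ → ℝ, ∑ j ∈ Finset.range n, g j * w j =
      (∑ j ∈ Finset.range k, g j) + (g k * a + g (k+1) * b) := by
    intro g
    have htail : ∑ j ∈ Finset.Ico (k+2) n, g j * w j = 0 := by
      refine Finset.sum_eq_zero fun j hj => ?_
      have hj2 : k + 2 ≤ j := (Finset.mem_Ico.mp hj).1
      have : w j = 0 := by
        simp only [hwdef]
        rw [if_neg (by omega), if_neg (by omega), if_neg (by omega)]
      rw [this, mul_zero]
    rw [← Finset.sum_range_add_sum_Ico _ hk3, htail, add_zero,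
      Finset.sum_range_succ, Finset.sum_range_succ]
    have hwk : w k = a := by simp only [hwdef]; rw [if_neg (by omega)]; simp
    have hwk1 : w (k+1) = b := by
      simp only [hwdef]; rw [if_neg (by omega), if_neg (by omega)]; simp
    have hhead : ∑ j ∈ Finset.range k, g j * w j = ∑ j ∈ Finset.range k, g j := by
      refine Finset.sum_congr rfl fun j hj => ?_
      have : w j = 1 := by simp only [hwdef]; rw [if_pos (Finset.mem_range.mp hj)]
      rw [this, mul_one]
    rw [hwk, hwk1, hhead]; ring
  refine ⟨fun j => w (j:ℕ), ⟨?_, ?_, ?_⟩, ?_⟩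
  · intro i
    simp only [hwdef]
    split_ifs <;> constructor <;> linarith
  · intro i j hij
    have hij' : (i:ℕ) ≤ (j:ℕ) := hij
    simp only [hwdef]
    split_ifs <;> first | linarith | omega
  · -- sum = z
    have h := hsplit (fun _ => (1:ℝ))
    simp only [one_mul] at h
    rw [Fin.sum_univ_eq_sum_range (fun j => w j) n, h, Finset.sum_const, Finset.card_range,
      nsmul_eq_mul, mul_one]
    rw [hadef, hbdef]; ring
  · -- value
    show min (altSum fun j => w (j:ℕ)) (1 - altSum fun j => w (j:ℕ)) = m
    have hf : altSum (fun j : Fin n => w (j:ℕ)) = (1 - (-1:ℝ)^k)/2 + (-1:ℝ)^k * m := by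
      rw [altSum, Fin.sum_univ_eq_sum_range (fun j => (-1:ℝ)^j * w j) n,
        hsplit (fun j => (-1:ℝ)^j), aux_negsum, pow_succ]
      rw [hadef]; ring
    rcases Nat.even_or_odd k with hk | hk
    · rw [hf, hk.neg_one_pow]
      have : (1 - (1:ℝ))/2 + 1 * m = m := by ring
      rw [this]
      exact min_eq_left (by linarith)
    · rw [hf, hk.neg_one_pow]
      have h1 : (1 - (-1:ℝ))/2 + (-1) * m = 1 - m := by ring
      have h2 : 1 - ((1:ℝ) - m) = m := by ring
      rw [h1, h2]
      exact min_eq_right (by linarith)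

/-- the cheating lemma: the maximum of `min(f(x), 1 - f(x))` over ordered
`x ∈ [0,1]^n` with `∑ x_i = z` equals `min(z, n - z, 1/2)`. -/
theorem stmt15 (n : ℕ) (z : ℝ) (hz0 : 0 ≤ z) (hz1 : z ≤ n) :
    IsGreatest
      ((fun x : Fin n → ℝ => min (altSum x) (1 - altSum x)) ''
        {x | (∀ i, 0 ≤ x i ∧ x i ≤ 1) ∧ (∀ i j : Fin n, i ≤ j → x j ≤ x i) ∧ ∑ i, x i = z})
      (min z (min ((n : ℝ) - z) (1 / 2))) := by
  constructor
  · -- membership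
    match n, hz1 with
    | 0, hz1 =>
      have hz : z = 0 := le_antisymm (by simpa using hz1) hz0
      refine ⟨fun j => 0, ⟨fun i => by norm_num, fun i j _ => le_refl _, by simp [hz]⟩, ?_⟩
      have h0 : altSum (fun _ : Fin 0 => (0:ℝ)) = 0 := by simp [altSum]
      simp only [h0, hz]
      norm_num
    | 1, hz1 =>
      have hz1' : z ≤ 1 := by simpa using hz1
      refine ⟨fun _ => z, ⟨fun i => ⟨hz0, hz1'⟩, fun i j _ => le_refl _, by simp⟩, ?_⟩
      have h0 : altSum (fun _ : Fin 1 => z) = z := by simp [altSum]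
      simp only [h0]
      have hmin : min z (1 - z) ≤ 1/2 := by
        rcases le_total z (1 - z) with h | h
        · exact le_trans (min_le_left _ _) (by linarith)
        · exact le_trans (min_le_right _ _) (by linarith)
      rw [Nat.cast_one, ← min_assoc, min_eq_left hmin]
    | (N + 2), hz1 => exact aux_mem (N + 2) z hz0 hz1 (by omega)
  · -- upper bound
    rintro y ⟨x, ⟨hx01, -, hsum⟩, rfl⟩
    simp only
    have hS : ∑ j : Fin n, ((-1:ℝ))^(j:ℕ) = (1 - (-1)^n)/2 := by
      rw [← aux_negsum n, Fin.sum_univ_eq_sum_range]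
    have hcard : ∑ _j : Fin n, (1:ℝ) = n := by simp
    have hfz : altSum x ≤ z := by
      rw [← hsum, altSum]
      refine Finset.sum_le_sum fun j _ => ?_
      rcases Nat.even_or_odd (j:ℕ) with h | h
      · rw [h.neg_one_pow]; linarith [(hx01 j).1]
      · rw [h.neg_one_pow]; linarith [(hx01 j).1]
    have h2 : altSum x + z ≤ (n:ℝ) + (1 - (-1:ℝ)^n)/2 := by
      calc altSum x + z = ∑ j : Fin n, ((-1:ℝ)^(j:ℕ) * x j + x j) := by
            rw [← hsum, altSum, ← Finset.sum_add_distrib]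
        _ ≤ ∑ j : Fin n, ((1:ℝ) + (-1:ℝ)^(j:ℕ)) := by
            refine Finset.sum_le_sum fun j _ => ?_
            rcases Nat.even_or_odd (j:ℕ) with h | h
            · rw [h.neg_one_pow]; linarith [(hx01 j).2]
            · rw [h.neg_one_pow]; linarith [(hx01 j).1]
        _ = (n:ℝ) + (1 - (-1:ℝ)^n)/2 := by rw [Finset.sum_add_distrib, hS, hcard]
    have h3 : (1 - altSum x) + z ≤ 1 + (n:ℝ) - (1 - (-1:ℝ)^n)/2 := by
      have : ∑ j : Fin n, (x j - (-1:ℝ)^(j:ℕ) * x j) ≤ ∑ j : Fin n, ((1:ℝ) - (-1:ℝ)^(j:ℕ)) := by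
        refine Finset.sum_le_sum fun j _ => ?_
        rcases Nat.even_or_odd (j:ℕ) with h | h
        · rw [h.neg_one_pow]; linarith [(hx01 j).1]
        · rw [h.neg_one_pow]; linarith [(hx01 j).2]
      rw [Finset.sum_sub_distrib, Finset.sum_sub_distrib, hS, hcard, ← altSum, hsum] at this
      linarith
    refine le_min (le_trans (min_le_left _ _) hfz) (le_min ?_ ?_)
    · rcases Nat.even_or_odd n with h | h
      · rw [h.neg_one_pow] at h2
        exact le_trans (min_le_left _ _) (by linarith)
      · rw [h.neg_one_pow] at h3
        exact le_trans (min_le_right _ _) (by linarith)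
    · rcases le_total (altSum x) (1/2) with h | h
      · exact le_trans (min_le_left _ _) h
      · exact le_trans (min_le_right _ _) (by linarith)
end

section
/- Multi-parity cheating theorem: Let r in N^k, let z_i in [0, r_i] for each i in [k], and define gamma(z_i) := min(z_i, r_i - z_i, 1/2). Let I_family be a collection of subsets of [k] such that sum_{i in I} gamma(z_i) >= 1 for every I in I_family. Then there exist vectors x^(i) in P_ord^{r_i} with sum_{j=1}^{r_i} x^(i)_j = z_i for all i, such that for every I in I_family and every subset F of I: sum_{i in I\F} f(x^(i)) + sum_{i in F} (1 - f(x^(i))) >= 1. In particular, (x^(i))_{i in I} lies in both the ordered even and ordered odd parity polytopes corresponding to (r_i)_{i in I}. -/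
open Finset

/-- a ones, then s, then t, then zeros. -/
def pvec (a : ℕ) (s t : ℝ) (j : ℕ) : ℝ :=
  if j < a then 1 else if j = a then s else if j = a + 1 then t else 0

lemma pvec_mem (a : ℕ) {s t : ℝ} (ht : 0 ≤ t) (hts : t ≤ s) (hs : s ≤ 1) (j : ℕ) :
    0 ≤ pvec a s t j ∧ pvec a s t j ≤ 1 := by
  unfold pvec; split_ifs <;> constructor <;> linarith

lemma pvec_anti (a : ℕ) {s t : ℝ} (ht : 0 ≤ t) (hts : t ≤ s) (hs : s ≤ 1)
    {j j' : ℕ} (h : j ≤ j') : pvec a s t j' ≤ pvec a s t j := by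
  unfold pvec; split_ifs <;> first | linarith | omega

lemma pvec_sum (m a : ℕ) (s t : ℝ) (ha : a < m) :
    ∑ j ∈ range m, pvec a s t j = a + s + (if a + 1 < m then t else 0) := by
  have h : ∀ j, pvec a s t j = (if j ∈ range a then (1:ℝ) else 0)
      + (if j = a then s else 0) + (if j = a + 1 then t else 0) := by
    intro j; unfold pvec; simp only [mem_range]; split_ifs <;> first | ring1 | (exfalso; omega)
  simp only [h]
  rw [Finset.sum_add_distrib, Finset.sum_add_distrib]
  have hr : range m ∩ range a = range a := by
    rw [Finset.inter_comm, Finset.inter_eq_left]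
    exact Finset.range_subset_range.mpr ha.le
  congr 1
  · congr 1
    · rw [Finset.sum_ite_mem, hr]; simp
    · rw [Finset.sum_ite_eq' (range m) a fun _ => s]
      simp [mem_range.mpr ha]
  · rw [Finset.sum_ite_eq' (range m) (a+1) fun _ => t]
    simp [mem_range]

lemma pvec_alt (m a : ℕ) (s t : ℝ) (ha : a < m) :
    ∑ j ∈ range m, (-1:ℝ)^j * pvec a s t j
      = (if Even a then 0 else 1) + (-1:ℝ)^a * s
        + (if a + 1 < m then (-1:ℝ)^(a+1) * t else 0) := by
  have h : ∀ j, (-1:ℝ)^j * pvec a s t j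
      = (if j ∈ range a then (-1:ℝ)^j else 0)
        + (if j = a then (-1:ℝ)^j * s else 0)
        + (if j = a + 1 then (-1:ℝ)^j * t else 0) := by
    intro j; unfold pvec; simp only [mem_range]
    split_ifs <;> first | ring1 | (exfalso; omega)
  simp only [h]
  rw [Finset.sum_add_distrib, Finset.sum_add_distrib]
  have hr : range m ∩ range a = range a := by
    rw [Finset.inter_comm, Finset.inter_eq_left]
    exact Finset.range_subset_range.mpr ha.le
  congr 1
  · congr 1
    · rw [Finset.sum_ite_mem, hr, neg_one_geom_sum]
    · rw [Finset.sum_ite_eq' (range m) a fun j => (-1:ℝ)^j * s]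
      simp [mem_range.mpr ha]
  · rw [Finset.sum_ite_eq' (range m) (a+1) fun j => (-1:ℝ)^j * t]
    simp [mem_range]

lemma exists_good (m : ℕ) (z : ℝ) (h0 : 0 ≤ z) (h1 : z ≤ m) :
    ∃ x : Fin m → ℝ,
      (∀ j, 0 ≤ x j ∧ x j ≤ 1) ∧ (∀ j j' : Fin m, j ≤ j' → x j' ≤ x j) ∧
      (∑ j, x j = z) ∧
      min z (min ((m:ℝ) - z) (1/2)) ≤ altSum x ∧
      altSum x ≤ 1 - min z (min ((m:ℝ) - z) (1/2)) := by
  set γ : ℝ := min z (min ((m:ℝ) - z) (1/2)) with hγdef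
  have hγz : γ ≤ z := min_le_left _ _
  have hγm : γ ≤ (m:ℝ) - z := le_trans (min_le_right _ _) (min_le_left _ _)
  have hγh : γ ≤ 1/2 := le_trans (min_le_right _ _) (min_le_right _ _)
  rcases Nat.eq_zero_or_pos m with hm0 | hm
  · subst hm0
    have hz0 : z = 0 := le_antisymm (by simpa using h1) h0
    refine ⟨fun j => 0, by simp, by simp, ?_, ?_, ?_⟩
    · simp [hz0]
    · simp only [altSum]
      simp
      rw [hγdef, hz0]; norm_num
    · simp only [altSum]
      simp
      rw [hγdef, hz0]; norm_num
  · -- m ≥ 1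
    by_cases hA : z ≤ 1/2
    · -- x = (z, 0, ..., 0)
      refine ⟨fun j => pvec 0 z 0 (j : ℕ), fun j => pvec_mem 0 le_rfl h0 (by linarith) _,
        fun j j' h => pvec_anti 0 le_rfl h0 (by linarith) h, ?_, ?_, ?_⟩
      · rw [Fin.sum_univ_eq_sum_range (fun j => pvec 0 z 0 j) m, pvec_sum m 0 z 0 hm]
        simp
      · have : altSum (fun j : Fin m => pvec 0 z 0 (j : ℕ)) = z := by
          unfold altSum
          rw [Fin.sum_univ_eq_sum_range (fun j => (-1:ℝ)^j * pvec 0 z 0 j) m,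
            pvec_alt m 0 z 0 hm]
          simp
        rw [this]; exact hγz
      · have : altSum (fun j : Fin m => pvec 0 z 0 (j : ℕ)) = z := by
          unfold altSum
          rw [Fin.sum_univ_eq_sum_range (fun j => (-1:ℝ)^j * pvec 0 z 0 j) m,
            pvec_alt m 0 z 0 hm]
          simp
        rw [this]; linarith
    · push_neg at hA
      by_cases hC : (m:ℝ) - 1/2 ≤ z
      · -- x = (1,...,1, s)
        have hm1 : ((m - 1 : ℕ) : ℝ) = (m:ℝ) - 1 := by
          rw [Nat.cast_sub hm]; simp
        set s : ℝ := z - ((m:ℝ) - 1) with hs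
        have hs0 : 1/2 ≤ s := by rw [hs]; linarith
        have hs1 : s ≤ 1 := by rw [hs]; linarith
        have ha : m - 1 < m := by omega
        have hnot : ¬ (m - 1 + 1 < m) := by omega
        refine ⟨fun j => pvec (m-1) s 0 (j : ℕ), fun j => pvec_mem _ le_rfl (by linarith) hs1 _,
          fun j j' h => pvec_anti _ le_rfl (by linarith) hs1 h, ?_, ?_⟩
        · rw [Fin.sum_univ_eq_sum_range (fun j => pvec (m-1) s 0 j) m, pvec_sum m (m-1) s 0 ha]
          rw [if_neg hnot, hm1, hs]; ring
        · have halt : altSum (fun j : Fin m => pvec (m-1) s 0 (j : ℕ))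
              = (if Even (m-1) then 0 else 1) + (-1:ℝ)^(m-1) * s := by
            unfold altSum
            rw [Fin.sum_univ_eq_sum_range (fun j => (-1:ℝ)^j * pvec (m-1) s 0 j) m,
              pvec_alt m (m-1) s 0 ha, if_neg hnot]
            ring
          rcases Nat.even_or_odd (m-1) with he | ho
          · rw [halt, if_pos he, he.neg_one_pow]
            constructor <;> linarith
          · rw [halt, if_neg (Nat.not_even_iff_odd.mpr ho), ho.neg_one_pow]
            constructor <;> linarith
      · -- middle case: γ-relevant bound is 1/2, need altSum = 1/2
        push_neg at hC
        have hm2 : 2 ≤ m := by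
          by_contra h
          interval_cases m <;> simp_all <;> linarith
        set a : ℕ := min (⌊z - 1/2⌋).toNat (m - 2) with hadef
        have hfl0 : (0:ℤ) ≤ ⌊z - 1/2⌋ := Int.floor_nonneg.mpr (by linarith)
        have hflR : ((⌊z - 1/2⌋).toNat : ℝ) = ((⌊z - 1/2⌋ : ℤ) : ℝ) := by
          exact_mod_cast congrArg (fun n : ℤ => (n:ℝ)) (Int.toNat_of_nonneg hfl0)
        have hm2R : ((m - 2 : ℕ) : ℝ) = (m:ℝ) - 2 := by
          rw [Nat.cast_sub hm2]; simp
        have haR : ((a:ℕ):ℝ) = min ((⌊z - 1/2⌋).toNat : ℝ) ((m-2 : ℕ) : ℝ) := by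
          rw [hadef]; push_cast; simp
        have haub : (a:ℝ) ≤ z - 1/2 := by
          rw [haR]
          refine le_trans (min_le_left _ _) ?_
          rw [hflR]; exact Int.floor_le _
        have halb : z - 3/2 ≤ (a:ℝ) := by
          rw [haR]
          refine le_min ?_ ?_
          · rw [hflR]
            have := Int.sub_one_lt_floor (z - 1/2)
            linarith
          · rw [hm2R]; linarith
        have ham : a + 1 < m := by
          have : a ≤ m - 2 := min_le_right _ _
          omega
        set t : ℝ := (z - a - 1/2)/2 with htdef
        set s : ℝ := t + 1/2 with hsdef
        have ht0 : 0 ≤ t := by rw [htdef]; linarith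
        have ht2 : t ≤ 1/2 := by rw [htdef]; linarith
        have hts : t ≤ s := by rw [hsdef]; linarith
        have hs1 : s ≤ 1 := by rw [hsdef]; linarith
        refine ⟨fun j => pvec a s t (j : ℕ), fun j => pvec_mem _ ht0 hts hs1 _,
          fun j j' h => pvec_anti _ ht0 hts hs1 h, ?_, ?_⟩
        · rw [Fin.sum_univ_eq_sum_range (fun j => pvec a s t j) m,
            pvec_sum m a s t (by omega), if_pos ham, hsdef, htdef]
          ring
        · have halt : altSum (fun j : Fin m => pvec a s t (j : ℕ))
              = (if Even a then 0 else 1) + (-1:ℝ)^a * s + (-1:ℝ)^(a+1) * t := by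
            unfold altSum
            rw [Fin.sum_univ_eq_sum_range (fun j => (-1:ℝ)^j * pvec a s t j) m,
              pvec_alt m a s t (by omega), if_pos ham]
          have hval : altSum (fun j : Fin m => pvec a s t (j : ℕ)) = 1/2 := by
            rw [halt]
            rcases Nat.even_or_odd a with he | ho
            · rw [if_pos he, he.neg_one_pow, pow_succ, he.neg_one_pow, hsdef]; ring
            · rw [if_neg (Nat.not_even_iff_odd.mpr ho), ho.neg_one_pow, pow_succ,
                ho.neg_one_pow, hsdef]; ring
          rw [hval]
          constructor <;> linarith

/-- multi-parity cheating theorem. -/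
theorem stmt18 (k : ℕ) (r : Fin k → ℕ) (z : Fin k → ℝ)
    (hz : ∀ i, 0 ≤ z i ∧ z i ≤ r i)
    (I_family : Set (Finset (Fin k)))
    (hI : ∀ I ∈ I_family, 1 ≤ ∑ i ∈ I, min (z i) (min ((r i : ℝ) - z i) (1 / 2))) :
    ∃ x : ∀ i, Fin (r i) → ℝ,
      (∀ i, (∀ j, 0 ≤ x i j ∧ x i j ≤ 1) ∧
        (∀ j j' : Fin (r i), j ≤ j' → x i j' ≤ x i j) ∧ ∑ j, x i j = z i) ∧
      ∀ I ∈ I_family, ∀ F ⊆ I,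
        1 ≤ ∑ i ∈ I \ F, altSum (x i) + ∑ i ∈ F, (1 - altSum (x i)) := by
  choose x hx1 hx2 hx3 hx4 hx5 using fun i => exists_good (r i) (z i) (hz i).1 (hz i).2
  refine ⟨x, fun i => ⟨hx1 i, hx2 i, hx3 i⟩, ?_⟩
  intro I hImem F hF
  have h1 : ∑ i ∈ I \ F, min (z i) (min ((r i : ℝ) - z i) (1/2)) ≤ ∑ i ∈ I \ F, altSum (x i) :=
    Finset.sum_le_sum fun i _ => hx4 i
  have h2 : ∑ i ∈ F, min (z i) (min ((r i : ℝ) - z i) (1/2)) ≤ ∑ i ∈ F, (1 - altSum (x i)) :=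
    Finset.sum_le_sum fun i _ => by have := hx5 i; linarith
  have h3 : ∑ i ∈ I \ F, min (z i) (min ((r i : ℝ) - z i) (1/2))
      + ∑ i ∈ F, min (z i) (min ((r i : ℝ) - z i) (1/2))
      = ∑ i ∈ I, min (z i) (min ((r i : ℝ) - z i) (1/2)) := Finset.sum_sdiff hF
  have h4 := hI I hImem
  linarith
end
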